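/- For the indicator-regularized function f(M) = ½‖M‖_F² on matrices of rank at most r, the convex envelope ½‖M‖_{F,r*}² agrees with f exactly on the set {M : rank(M) ≤ r}, i.e., rank(M) ≤ r implies ‖M‖_{F,r*} = ‖M‖_F. -/

import Mathlib

open Matrix BigOperators Finset

/-- Singular values of a real `n × m` matrix, in nonincreasing order, 0-indexed:
`sv M 0 ≥ sv M 1 ≥ …` are the singular values (square roots of the eigenvalues of `Mᵀ M`). -/
noncomputable def sv {n m : ℕ} (M : Matrix (Fin n) (Fin m) ℝ) (i : ℕ) : ℝ :=
  (((List.ofFn fun j : Fin m =>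
      Real.sqrt ((show (Mᵀ * M).IsHermitian by
        simpa [Matrix.conjTranspose_eq_transpose_of_trivial] using
          Matrix.isHermitian_conjTranspose_mul_self M).eigenvalues j)).mergeSort
      (fun a b => decide (a ≥ b))).getD i 0)

/-- Trace inner product `⟨M, Y⟩ = tr (Mᵀ Y)`. -/
def ip {n m : ℕ} (M Y : Matrix (Fin n) (Fin m) ℝ) : ℝ := ∑ i, ∑ j, M i j * Y i j

/-- Frobenius norm. -/
noncomputable def fro {n m : ℕ} (M : Matrix (Fin n) (Fin m) ℝ) : ℝ :=
  Real.sqrt (∑ i, ∑ j, M i j ^ 2)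

/-- Truncated Frobenius norm `‖M‖_{F,r} = sqrt (σ₁² + ⋯ + σᵣ²)`. -/
noncomputable def truncFro {n m : ℕ} (r : ℕ) (M : Matrix (Fin n) (Fin m) ℝ) : ℝ :=
  Real.sqrt (∑ i ∈ Finset.range r, sv M i ^ 2)

/-- Dual norm with respect to the trace inner product. -/
noncomputable def dualNorm {n m : ℕ} (ν : Matrix (Fin n) (Fin m) ℝ → ℝ)
    (M : Matrix (Fin n) (Fin m) ℝ) : ℝ :=
  sSup {c : ℝ | ∃ Y, ν Y ≤ 1 ∧ c = ip M Y}

/-- Low-rank inducing Frobenius norm `‖·‖_{F,r*}`, the dual of `‖·‖_{F,r}`. -/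
noncomputable def lowRankFro {n m : ℕ} (r : ℕ) (M : Matrix (Fin n) (Fin m) ℝ) : ℝ :=
  dualNorm (truncFro r) M

/-- Ky Fan `r`-norm: sum of the `r` largest singular values. -/
noncomputable def kyFan {n m : ℕ} (r : ℕ) (M : Matrix (Fin n) (Fin m) ℝ) : ℝ :=
  ∑ i ∈ Finset.range r, sv M i

/-- Nuclear norm: sum of all singular values. -/
noncomputable def nuclear {n m : ℕ} (M : Matrix (Fin n) (Fin m) ℝ) : ℝ :=
  ∑ i ∈ Finset.range (min n m), sv M i

/-!
The value `‖M‖_F` is attained at `Y = M / ‖M‖_F`, which is admissible because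
`‖Y‖_{F,r} ≤ ‖Y‖_F`. For the converse, let `w₁, …, w_k` be an orthonormal basis of the row space
of `M`, so `k = rank M ≤ r`. Since the rows of `M` lie in that space, `⟨M, Y⟩` only sees the
coordinates of the rows of `Y` along the `wᵢ`, and Cauchy–Schwarz gives
`⟨M, Y⟩ ≤ ‖M‖_F (∑ᵢ ‖Y wᵢ‖²)^{1/2}`. By Ky Fan's maximum principle `∑ᵢ ‖Y wᵢ‖²` is at most the
sum of the `k` largest squared singular values of `Y`, hence at most `‖Y‖_{F,r}²`.
-/

open Module InnerProductSpace

theorem sum_mul_le_sum_range_of_antitone {N k : ℕ} (hkN : k ≤ N) {s : ℕ → ℝ} (hs : Antitone s)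
    {c : Fin N → ℝ} (hc0 : ∀ j, 0 ≤ c j) (hc1 : ∀ j, c j ≤ 1) (hc : ∑ j, c j = k) :
    ∑ j : Fin N, s j * c j ≤ ∑ j ∈ range k, s j := by
  set top : Fin N → ℝ := fun j => if (j : ℕ) < k then 1 else 0
  have hsum_top (f : ℕ → ℝ) : ∑ j : Fin N, f j * top j = ∑ j ∈ range k, f j := by
    rw [Fin.sum_univ_eq_sum_range (fun j => f j * if j < k then 1 else 0)]
    simp only [mul_ite, mul_one, mul_zero]
    rw [← sum_filter]
    congr 1
    ext j
    simp only [mem_filter, mem_range]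
    omega
  have htop : ∑ j : Fin N, top j = k := by simpa using hsum_top 1
  -- `s k` separates the first `k` values of `s` from the rest: `(s j - s k) (c j - top j) ≤ 0`.
  have hterm (j : Fin N) : s j * c j ≤ s j * top j + s k * (c j - top j) := by
    simp only [top]
    split_ifs with hj
    · nlinarith [hs hj.le, hc1 j]
    · nlinarith [hs (not_lt.mp hj), hc0 j]
  calc ∑ j : Fin N, s j * c j ≤ ∑ j : Fin N, (s j * top j + s k * (c j - top j)) :=
        sum_le_sum fun j _ => hterm j
    _ = ∑ j ∈ range k, s j := by
      rw [sum_add_distrib, ← mul_sum, sum_sub_distrib, hc, htop, hsum_top s, sub_self, mul_zero,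
        add_zero]

namespace LinearMap

variable {𝕜 : Type*} [RCLike 𝕜]
  {E : Type*} [NormedAddCommGroup E] [InnerProductSpace 𝕜 E] [FiniteDimensional 𝕜 E]
  {F : Type*} [NormedAddCommGroup F] [InnerProductSpace 𝕜 F] [FiniteDimensional 𝕜 F]
  (T : E →ₗ[𝕜] F)

theorem norm_sq_apply_eq_sum_singularValues_sq (x : E) :
    ‖T x‖ ^ 2 = ∑ j : Fin (finrank 𝕜 E), T.singularValues j ^ 2 *
      ‖⟪x, T.isSymmetric_adjoint_comp_self.eigenvectorBasis rfl j⟫_𝕜‖ ^ 2 := by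
  set hS := T.isSymmetric_adjoint_comp_self
  rw [@norm_sq_eq_re_inner 𝕜, ← adjoint_inner_left, ← comp_apply,
    ← (hS.eigenvectorBasis rfl).sum_inner_mul_inner, map_sum]
  refine Finset.sum_congr rfl fun j _ => ?_
  rw [hS, hS.apply_eigenvectorBasis, inner_smul_right, mul_assoc, RCLike.re_ofReal_mul,
    inner_mul_symm_re_eq_norm, norm_mul, norm_inner_symm, ← sq, T.sq_singularValues_fin rfl]

theorem sum_norm_sq_apply_le_sum_singularValues_sq {k : ℕ} {w : Fin k → E}
    (hw : Orthonormal 𝕜 w) :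
    ∑ i, ‖T (w i)‖ ^ 2 ≤ ∑ j ∈ Finset.range k, T.singularValues j ^ 2 := by
  set e := T.isSymmetric_adjoint_comp_self.eigenvectorBasis rfl
  set c : Fin (finrank 𝕜 E) → ℝ := fun j => ∑ i, ‖⟪w i, e j⟫_𝕜‖ ^ 2
  have hk : k ≤ finrank 𝕜 E := by
    simpa using hw.linearIndependent.fintype_card_le_finrank
  have hσ : Antitone fun j => T.singularValues j ^ 2 := fun a b hab =>
    pow_le_pow_left₀ (T.singularValues_nonneg b) (T.singularValues_antitone hab) 2
  have hc1 (j) : c j ≤ 1 := by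
    simpa [e.norm_eq_one] using hw.sum_inner_products_le (e j) (s := univ)
  have hc : ∑ j, c j = k := by
    rw [sum_comm]
    simp [e.sum_sq_norm_inner_left, hw.1]
  calc ∑ i, ‖T (w i)‖ ^ 2 = ∑ j : Fin (finrank 𝕜 E), T.singularValues j ^ 2 * c j := by
        simp only [norm_sq_apply_eq_sum_singularValues_sq, c, mul_sum]
        exact sum_comm
    _ ≤ ∑ j ∈ Finset.range k, T.singularValues j ^ 2 :=
        sum_mul_le_sum_range_of_antitone hk hσ (fun j => by positivity) hc1 hc

theorem sum_norm_sq_apply_orthonormalBasis {ι : Type*} [Fintype ι] (b : OrthonormalBasis ι 𝕜 E) :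
    ∑ i, ‖T (b i)‖ ^ 2 = ∑ j ∈ Finset.range (finrank 𝕜 E), T.singularValues j ^ 2 := by
  simp only [norm_sq_apply_eq_sum_singularValues_sq]
  rw [sum_comm]
  simp only [← mul_sum, b.sum_sq_norm_inner_right, OrthonormalBasis.norm_eq_one, one_pow, mul_one]
  exact Fin.sum_univ_eq_sum_range (fun j => T.singularValues j ^ 2) _

theorem sum_range_singularValues_sq_le (r : ℕ) :
    ∑ j ∈ Finset.range r, T.singularValues j ^ 2 ≤
      ∑ j ∈ Finset.range (finrank 𝕜 E), T.singularValues j ^ 2 :=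
  calc ∑ j ∈ Finset.range r, T.singularValues j ^ 2
      ≤ ∑ j ∈ Finset.range (max r (finrank 𝕜 E)), T.singularValues j ^ 2 :=
        sum_le_sum_of_subset_of_nonneg (range_subset_range.2 (le_max_left _ _))
          fun _ _ _ => sq_nonneg _
    _ = ∑ j ∈ Finset.range (finrank 𝕜 E), T.singularValues j ^ 2 := by
        refine (sum_subset (range_subset_range.2 (le_max_right _ _)) fun j _ hj => ?_).symm
        simp [T.singularValues_of_finrank_le (not_lt.1 (Finset.mem_range.not.1 hj))]

end LinearMap

theorem OrthonormalBasis.inner_eq_sum_inner_mul_inner_of_mem {𝕜 E ι : Type*} [RCLike 𝕜]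
    [NormedAddCommGroup E] [InnerProductSpace 𝕜 E] [Fintype ι] {K : Submodule 𝕜 E}
    (b : OrthonormalBasis ι 𝕜 K) {x : E} (hx : x ∈ K) (y : E) :
    ⟪x, y⟫_𝕜 = ∑ i, ⟪x, (b i : E)⟫_𝕜 * ⟪(b i : E), y⟫_𝕜 := by
  have hsum : ∑ i, ⟪(b i : E), x⟫_𝕜 • (b i : E) = x := by
    simpa using congrArg (Subtype.val : K → E) (b.sum_repr' ⟨x, hx⟩)
  conv_lhs => rw [← hsum]
  simp [sum_inner, inner_smul_left]

lemma List.getD_ofFn_eq {α : Type*} {N : ℕ} (s : ℕ → α) (d : α) (hs : ∀ i, N ≤ i → s i = d)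
    (i : ℕ) : (List.ofFn fun j : Fin N => s j).getD i d = s i := by
  rw [List.getD_eq_getElem?_getD]
  rcases lt_or_ge i N with h | h
  · simp [h]
  · simp [h, hs i h]

lemma List.ofFn_comp_equiv_perm {α : Type*} {a b : ℕ} (e : Fin a ≃ Fin b) (f : Fin b → α) :
    (List.ofFn (f ∘ e)).Perm (List.ofFn f) := by
  obtain rfl : a = b := by simpa using Fintype.card_congr e
  exact Equiv.Perm.ofFn_comp_perm e f

theorem sv_eq_singularValues {n m : ℕ} (Y : Matrix (Fin n) (Fin m) ℝ) (i : ℕ) :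
    sv Y i = (toEuclideanLin Y).singularValues i := by
  set T := toEuclideanLin Y
  have hH : (Yᵀ * Y).IsHermitian := by
    simpa [conjTranspose_eq_transpose_of_trivial] using isHermitian_conjTranspose_mul_self Y
  have hTT : LinearMap.adjoint T ∘ₗ T = toEuclideanLin (Yᵀ * Y) := by
    rw [toLpLin_mul_same, ← conjTranspose_eq_transpose_of_trivial,
      toEuclideanLin_conjTranspose_eq_adjoint]
  -- `hH.eigenvalues` is the sorted list `hH.eigenvalues₀` reindexed along an arbitrary
  -- `Fin m ≃ Fin (card (Fin m))`; sorted eigenvalues only depend on the characteristic polynomial.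
  have heig : List.ofFn hH.eigenvalues₀ =
      List.ofFn (T.isSymmetric_adjoint_comp_self.eigenvalues rfl) := by
    rw [IsHermitian.eigenvalues₀, ← LinearMap.IsSymmetric.sort_roots_charpoly_eq_eigenvalues,
      ← LinearMap.IsSymmetric.sort_roots_charpoly_eq_eigenvalues, hTT]
  have hsorted : (List.ofFn fun j => √(hH.eigenvalues j)).mergeSort (fun a b => decide (a ≥ b)) =
      List.ofFn fun j : Fin (finrank ℝ (EuclideanSpace ℝ (Fin m))) => T.singularValues j := by
    refine (List.mergeSort_perm _ _).trans ?_ |>.eq_of_sortedGE List.sortedGE_mergeSort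
      (Antitone.sortedGE_ofFn fun a b h => T.singularValues_antitone h)
    have hperm := (List.ofFn_comp_equiv_perm (Fintype.equivOfCardEq (Fintype.card_fin _)).symm
      hH.eigenvalues₀).map Real.sqrt
    rw [heig, List.map_ofFn, List.map_ofFn] at hperm
    rwa [show (List.ofFn fun j => T.singularValues j) = _ from
      congrArg List.ofFn (funext (T.singularValues_fin rfl))]
  rw [sv, hsorted]
  exact List.getD_ofFn_eq _ 0 (fun i hi => T.singularValues_of_finrank_le hi) i

section Frobenius

variable {n m : ℕ}

theorem fro_nonneg (A : Matrix (Fin n) (Fin m) ℝ) : 0 ≤ fro A := Real.sqrt_nonneg _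

theorem ip_self (A : Matrix (Fin n) (Fin m) ℝ) : ip A A = fro A ^ 2 := by
  rw [fro, Real.sq_sqrt (by positivity), ip]
  simp [sq]

theorem ip_smul_right (A B : Matrix (Fin n) (Fin m) ℝ) (c : ℝ) : ip A (c • B) = c * ip A B := by
  simp only [ip, Matrix.smul_apply, smul_eq_mul, mul_sum, mul_left_comm]

theorem fro_smul (c : ℝ) (A : Matrix (Fin n) (Fin m) ℝ) : fro (c • A) = |c| * fro A := by
  simp only [fro, Matrix.smul_apply, smul_eq_mul, mul_pow, ← mul_sum]
  rw [Real.sqrt_mul (sq_nonneg c), Real.sqrt_sq_eq_abs]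

theorem ip_le_fro_mul_fro (A B : Matrix (Fin n) (Fin m) ℝ) : ip A B ≤ fro A * fro B := by
  simpa only [ip, fro, ← Fintype.sum_prod_type'] using
    Real.sum_mul_le_sqrt_mul_sqrt univ (fun p : Fin n × Fin m => A p.1 p.2) (fun p => B p.1 p.2)

theorem ip_eq_sum_inner (A B : Matrix (Fin n) (Fin m) ℝ) :
    ip A B = ∑ a, ⟪WithLp.toLp 2 (A a), WithLp.toLp 2 (B a)⟫_ℝ := by
  simp [ip, PiLp.inner_apply, mul_comm]

theorem toEuclideanLin_apply_eq_inner (A : Matrix (Fin n) (Fin m) ℝ)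
    (v : EuclideanSpace ℝ (Fin m)) (a : Fin n) :
    toEuclideanLin A v a = ⟪WithLp.toLp 2 (A a), v⟫_ℝ := by
  simp [toLpLin_apply, mulVec, dotProduct, PiLp.inner_apply, mul_comm]

theorem fro_sq_eq_sum_singularValues_sq (A : Matrix (Fin n) (Fin m) ℝ) :
    fro A ^ 2 = ∑ j ∈ range (finrank ℝ (EuclideanSpace ℝ (Fin m))),
      (toEuclideanLin A).singularValues j ^ 2 := by
  rw [← LinearMap.sum_norm_sq_apply_orthonormalBasis _ (EuclideanSpace.basisFun (Fin m) ℝ),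
    ← ip_self, ip, sum_comm]
  refine sum_congr rfl fun j _ => ?_
  rw [EuclideanSpace.real_norm_sq_eq]
  simp [toLpLin_apply, sq]

theorem truncFro_le_fro (r : ℕ) (A : Matrix (Fin n) (Fin m) ℝ) : truncFro r A ≤ fro A := by
  rw [truncFro, ← Real.sqrt_sq (fro_nonneg A), fro_sq_eq_sum_singularValues_sq]
  simp only [sv_eq_singularValues]
  exact Real.sqrt_le_sqrt (LinearMap.sum_range_singularValues_sq_le _ r)

theorem finrank_span_rows_eq_rank (M : Matrix (Fin n) (Fin m) ℝ) :
    finrank ℝ (Submodule.span ℝ (Set.range fun a => WithLp.toLp 2 (M a))) = M.rank := by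
  have hrows : (Set.range fun a => WithLp.toLp 2 (M a)) =
      ((WithLp.linearEquiv 2 ℝ (Fin m → ℝ)).symm : (Fin m → ℝ) →ₗ[ℝ] EuclideanSpace ℝ (Fin m)) ''
        Set.range M.row := by
    rw [← Set.range_comp]
    rfl
  rw [hrows, Submodule.span_image, LinearEquiv.finrank_map_eq, M.rank_eq_finrank_span_row]

noncomputable def rowCoords {k : ℕ} (w : Fin k → EuclideanSpace ℝ (Fin m))
    (X : Matrix (Fin n) (Fin m) ℝ) : Matrix (Fin n) (Fin k) ℝ :=
  of fun a i => ⟪w i, WithLp.toLp 2 (X a)⟫_ℝ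

theorem ip_rowCoords {k : ℕ} {K : Submodule ℝ (EuclideanSpace ℝ (Fin m))}
    (b : OrthonormalBasis (Fin k) ℝ K) {M : Matrix (Fin n) (Fin m) ℝ}
    (hM : ∀ a, WithLp.toLp 2 (M a) ∈ K) (X : Matrix (Fin n) (Fin m) ℝ) :
    ip (rowCoords (fun i => b i) M) (rowCoords (fun i => b i) X) = ip M X := by
  rw [ip_eq_sum_inner M X, ip]
  refine sum_congr rfl fun a _ => ?_
  rw [b.inner_eq_sum_inner_mul_inner_of_mem (hM a)]
  simp [rowCoords, real_inner_comm]

theorem fro_rowCoords_sq {k : ℕ} (w : Fin k → EuclideanSpace ℝ (Fin m))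
    (X : Matrix (Fin n) (Fin m) ℝ) :
    fro (rowCoords w X) ^ 2 = ∑ i, ‖toEuclideanLin X (w i)‖ ^ 2 := by
  rw [← ip_self, ip, sum_comm]
  refine sum_congr rfl fun i _ => ?_
  rw [EuclideanSpace.real_norm_sq_eq]
  simp [toEuclideanLin_apply_eq_inner, rowCoords, real_inner_comm, sq]

theorem ip_le_fro_mul_truncFro {r : ℕ} {M : Matrix (Fin n) (Fin m) ℝ} (hrank : M.rank ≤ r)
    (Y : Matrix (Fin n) (Fin m) ℝ) : ip M Y ≤ fro M * truncFro r Y := by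
  set K := Submodule.span ℝ (Set.range fun a => WithLp.toLp 2 (M a))
  set b := stdOrthonormalBasis ℝ K
  set w : Fin (finrank ℝ K) → EuclideanSpace ℝ (Fin m) := fun i => b i
  have hrows (a) : WithLp.toLp 2 (M a) ∈ K := Submodule.subset_span ⟨a, rfl⟩
  have hM : fro (rowCoords w M) = fro M := by
    rw [← sq_eq_sq₀ (fro_nonneg _) (fro_nonneg _), ← ip_self, ← ip_self, ip_rowCoords b hrows]
  have hY : fro (rowCoords w Y) ≤ truncFro r Y := by
    rw [truncFro, ← Real.sqrt_sq (fro_nonneg _), fro_rowCoords_sq]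
    simp only [sv_eq_singularValues]
    refine Real.sqrt_le_sqrt <| (LinearMap.sum_norm_sq_apply_le_sum_singularValues_sq _
      (b.orthonormal.comp_linearIsometry K.subtypeₗᵢ)).trans <|
      sum_le_sum_of_subset_of_nonneg (range_subset_range.2 ?_) fun _ _ _ => sq_nonneg _
    rwa [finrank_span_rows_eq_rank]
  calc ip M Y = ip (rowCoords w M) (rowCoords w Y) := (ip_rowCoords b hrows Y).symm
    _ ≤ fro (rowCoords w M) * fro (rowCoords w Y) := ip_le_fro_mul_fro _ _
    _ ≤ fro M * truncFro r Y := by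
      rw [hM]
      exact mul_le_mul_of_nonneg_left hY (fro_nonneg M)

end Frobenius

theorem lowRankFro_eq_fro_of_rank_le_general {n m r : ℕ}
    (M : Matrix (Fin n) (Fin m) ℝ) (hrank : M.rank ≤ r) :
    lowRankFro r M = fro M := by
  refine IsGreatest.csSup_eq ⟨⟨(fro M)⁻¹ • M, ?_, ?_⟩, ?_⟩
  · calc truncFro r ((fro M)⁻¹ • M) ≤ fro ((fro M)⁻¹ • M) := truncFro_le_fro r _
      _ = (fro M)⁻¹ * fro M := by rw [fro_smul, abs_of_nonneg (inv_nonneg.2 (fro_nonneg M))]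
      _ ≤ 1 := inv_mul_le_one
  · rw [ip_smul_right, ip_self, sq, ← mul_assoc, inv_mul_mul_self]
  · rintro _ ⟨Y, hY, rfl⟩
    exact (ip_le_fro_mul_truncFro hrank Y).trans (mul_le_of_le_one_right (fro_nonneg M) hY)

/-- the convex envelope `½‖·‖_{F,r*}²` agrees with `½‖·‖_F²` on matrices of
rank at most `r`: `rank M ≤ r → ‖M‖_{F,r*} = ‖M‖_F`. -/
theorem lowRankFro_eq_fro_of_rank_le {n m r : ℕ} (hr1 : 1 ≤ r) (hr2 : r ≤ min n m)
    (M : Matrix (Fin n) (Fin m) ℝ) (hrank : M.rank ≤ r) :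
    lowRankFro r M = fro M :=
  lowRankFro_eq_fro_of_rank_le_general M hrank
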